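/- Let G be a graph model and suppose α ∈ M^G − N^G for closed λ-terms M, N. Then there exists a finite subpair A ≤ G such that for every partial pair B with A ≤ B ≤ G, we have α ∈ M^B − N^B. -/

import Mathlib

/-- Untyped λ-terms in de Bruijn notation. -/
inductive Term : Type
  | var : ℕ → Term
  | app : Term → Term → Term
  | lam : Term → Term
  deriving DecidableEq

namespace Term

/-- Lifting (shifting) of de Bruijn indices at cutoff `d`. -/
def lift (d : ℕ) : Term → Term
  | var n => if n < d then var n else var (n + 1)
  | app M N => app (lift d M) (lift d N)
  | lam M => lam (lift (d + 1) M)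

/-- Capture-avoiding substitution of `s` for index `k`. -/
def subst : Term → ℕ → Term → Term
  | var n, k, s => if n = k then s else if k < n then var (n - 1) else var n
  | app M N, k, s => app (subst M k s) (subst N k s)
  | lam M, k, s => lam (subst M (k + 1) (lift 0 s))

/-- One-step β-reduction (compatible closure of the β-rule). -/
inductive Step : Term → Term → Prop
  | beta (M N : Term) : Step (app (lam M) N) (subst M 0 N)
  | appL {M M' : Term} (N : Term) : Step M M' → Step (app M N) (app M' N)
  | appR (M : Term) {N N' : Term} : Step N N' → Step (app M N) (app M N')
  | xi {M M' : Term} : Step M M' → Step (lam M) (lam M')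

/-- β-conversion: the equivalence relation generated by one-step β-reduction. -/
def BetaConv : Term → Term → Prop := Relation.EqvGen Step

/-- An effective bijective numeration of λ-terms. -/
def encodeT : Term → ℕ
  | var n => 3 * n
  | app M N => 3 * Nat.pair (encodeT M) (encodeT N) + 1
  | lam M => 3 * encodeT M + 2

/-- `ClosedUnder k M`: all free de Bruijn indices of `M` are `< k`. -/
def ClosedUnder : ℕ → Term → Prop
  | k, var n => n < k
  | k, app M N => ClosedUnder k M ∧ ClosedUnder k N
  | k, lam M => ClosedUnder (k + 1) M

/-- Closed λ-terms. -/
def Closed (M : Term) : Prop := ClosedUnder 0 M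

end Term

/-- A set of λ-terms is recursively enumerable (w.r.t. the fixed effective
numeration `encodeT`) if membership is the domain of a partial recursive function. -/
def TermRE (X : Set Term) : Prop :=
  ∃ f : ℕ →. ℕ, Nat.Partrec f ∧ ∀ M : Term, M ∈ X ↔ (f (Term.encodeT M)).Dom

/-- A set of λ-terms closed under β-conversion. -/
def BetaClosed (X : Set Term) : Prop :=
  ∀ M N : Term, M ∈ X → Term.BetaConv M N → N ∈ X

/-- Extend an environment by pushing a new value for de Bruijn index `0`. -/
def consEnv {G : Type*} (d : Set G) (ρ : ℕ → Set G) : ℕ → Set G :=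
  fun k => match k with
  | 0 => d
  | k + 1 => ρ k

/-- Interpretation of λ-terms in a graph model `(G, c)`, where `c : G* × G → G`
is the (injective, total) code map and environments send variables to subsets of `G`. -/
def ginterp {G : Type*} (c : Finset G × G → G) : Term → (ℕ → Set G) → Set G
  | Term.var n, ρ => ρ n
  | Term.app M N, ρ =>
      {α | ∃ a : Finset G, ↑a ⊆ ginterp c N ρ ∧ c (a, α) ∈ ginterp c M ρ}
  | Term.lam M, ρ =>
      {β | ∃ (a : Finset G) (α : G), β = c (a, α) ∧ α ∈ ginterp c M (consEnv ↑a ρ)}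

/-- The λ-term `δ = λx.xx`. -/
def deltaTerm : Term := Term.lam (Term.app (Term.var 0) (Term.var 0))

/-- The λ-term `Ω = (λx.xx)(λx.xx)`. -/
def omegaTerm : Term := Term.app deltaTerm deltaTerm

/-- A partial pair on an ambient set of "web elements" `G`: a carrier set `A ⊆ G`
together with a partial code map `c_A : A* × A ⇀ A` (represented by `Option`). -/
structure PartialPair (G : Type*) where
  carrier : Set G
  code : Finset G × G → Option G

namespace PartialPair

/-- Well-formedness of a partial pair: the domain and values of the partial code
map lie in the carrier, and the code map is injective (where defined). -/
def Good {G : Type*} (P : PartialPair G) : Prop :=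
  (∀ (a : Finset G) (α γ : G), P.code (a, α) = some γ →
      ↑a ⊆ P.carrier ∧ α ∈ P.carrier ∧ γ ∈ P.carrier) ∧
  (∀ (p q : Finset G × G) (γ : G), P.code p = some γ → P.code q = some γ → p = q)

/-- `P.Sub Q`: `P` is a subpair of `Q` (`P ≤ Q`): the carrier of `P` is contained in
that of `Q` and the code map of `Q` extends that of `P`. -/
def Sub {G : Type*} (P Q : PartialPair G) : Prop :=
  P.carrier ⊆ Q.carrier ∧
  ∀ (p : Finset G × G) (γ : G), P.code p = some γ → Q.code p = some γ

/-- Interpretation of λ-terms in a partial pair, using only the defined part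
of the partial code map. -/
def interp {G : Type*} (P : PartialPair G) : Term → (ℕ → Set G) → Set G
  | Term.var n, ρ => ρ n
  | Term.app M N, ρ =>
      {α | α ∈ P.carrier ∧ ∃ a : Finset G, ↑a ⊆ interp P N ρ ∧
        ∃ γ : G, P.code (a, α) = some γ ∧ γ ∈ interp P M ρ}
  | Term.lam M, ρ =>
      {β | ∃ (a : Finset G) (α : G), P.code (a, α) = some β ∧
        α ∈ interp P M (consEnv ↑a ρ)}

end PartialPair

/-- The total pair associated to a graph model `(G, c)` (carrier is all of `G`). -/
def fullPair {G : Type*} (c : Finset G × G → G) : PartialPair G :=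
  ⟨Set.univ, fun p => some (c p)⟩

/-- The bottom environment, mapping every variable to `∅`. -/
def botEnv {G : Type*} : ℕ → Set G := fun _ => ∅

/-!
Interpretations in partial pairs are monotone along `≤`, and membership in an interpretation
is witnessed by finitely many applications of the code map. So `α ∈ M^G` already holds in the
restriction of `G` to a large enough finite set `A`, hence in every `B` with `A ≤ B`; and
`α ∉ N^G` passes down to every `B ≤ G` by monotonicity.
-/

open Filter

namespace PartialPair

variable {G : Type*}

theorem Sub.interp_subset {P Q : PartialPair G} (h : P.Sub Q) (M : Term) (ρ : ℕ → Set G) :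
    P.interp M ρ ⊆ Q.interp M ρ := by
  induction M generalizing ρ with
  | var n => exact subset_rfl
  | app M N ihM ihN =>
    rintro α ⟨hα, a, haN, γ, hcode, hγ⟩
    exact ⟨h.1 hα, a, haN.trans (ihN ρ), γ, h.2 _ _ hcode, ihM ρ hγ⟩
  | lam M ih =>
    rintro β ⟨a, α, hcode, hα⟩
    exact ⟨a, α, h.2 _ _ hcode, ih _ hα⟩

end PartialPair

section restrictPair

variable {G : Type*} (c : Finset G × G → G)

open Classical in
noncomputable def restrictPair (S : Finset G) : PartialPair G :=
  ⟨↑S, fun p => if p.1 ⊆ S ∧ p.2 ∈ S ∧ c p ∈ S then some (c p) else none⟩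

theorem restrictPair_code {S : Finset G} {a : Finset G} {α : G}
    (ha : a ⊆ S) (hα : α ∈ S) (hc : c (a, α) ∈ S) :
    (restrictPair c S).code (a, α) = some (c (a, α)) := by
  simp [restrictPair, ha, hα, hc]

theorem restrictPair_sub_fullPair (S : Finset G) : (restrictPair c S).Sub (fullPair c) := by
  refine ⟨Set.subset_univ _, fun p γ h => ?_⟩
  simp only [restrictPair] at h
  split_ifs at h
  exact h

theorem eventually_mem_interp_restrictPair {M : Term} {ρ : ℕ → Set G} {α : G}
    (h : α ∈ (fullPair c).interp M ρ) :
    ∀ᶠ S in atTop, α ∈ (restrictPair c S).interp M ρ := by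
  classical
  induction M generalizing ρ α with
  | var n => exact Eventually.of_forall fun _ => h
  | app M N ihM ihN =>
    obtain ⟨-, a, haN, γ, hcode, hγ⟩ := h
    obtain rfl : c (a, α) = γ := Option.some.inj hcode
    have hN : ∀ᶠ S in atTop, ∀ β ∈ a, β ∈ (restrictPair c S).interp N ρ :=
      (eventually_all_finset a).2 fun β hβ => ihN (haN hβ)
    filter_upwards [ihM hγ, hN, eventually_ge_atTop (insert α (insert (c (a, α)) a))]
      with S hSM hSN hS
    simp only [Finset.insert_subset_iff] at hS
    exact ⟨hS.1, a, hSN, c (a, α),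
      restrictPair_code c hS.2.2 hS.1 hS.2.1, hSM⟩
  | lam M ih =>
    obtain ⟨a, α', hcode, hα'⟩ := h
    obtain rfl : c (a, α') = α := Option.some.inj hcode
    filter_upwards [ih hα', eventually_ge_atTop (insert α' (insert (c (a, α')) a))]
      with S hSM hS
    simp only [Finset.insert_subset_iff] at hS
    exact ⟨a, α', restrictPair_code c hS.2.2 hS.1 hS.2.1, hSM⟩

end restrictPair

theorem separating_finite_subpair_general {G : Type*}
    (c : Finset G × G → G)
    (M N : Term) (α : G)
    (hmem : α ∈ (fullPair c).interp M botEnv)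
    (hnmem : α ∉ (fullPair c).interp N botEnv) :
    ∃ A : PartialPair G, A.carrier.Finite ∧ A.Sub (fullPair c) ∧
      ∀ B : PartialPair G, A.Sub B → B.Sub (fullPair c) →
        α ∈ B.interp M botEnv ∧ α ∉ B.interp N botEnv := by
  obtain ⟨S, hS⟩ := (eventually_mem_interp_restrictPair c hmem).exists
  refine ⟨restrictPair c S, S.finite_toSet, restrictPair_sub_fullPair c S,
    fun B hAB hBG => ⟨hAB.interp_subset M botEnv hS, fun hN => hnmem ?_⟩⟩
  exact hBG.interp_subset N botEnv hN

/-- If `α ∈ M^G − N^G` for closed `M, N` in a graph model `G`, then there is a finite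
subpair `A ≤ G` such that `α ∈ M^B − N^B` for every partial pair `B` with `A ≤ B ≤ G`. -/
theorem separating_finite_subpair {G : Type*} [Infinite G]
    (c : Finset G × G → G) (hc : Function.Injective c)
    (M N : Term) (hM : Term.Closed M) (hN : Term.Closed N) (α : G)
    (hmem : α ∈ (fullPair c).interp M botEnv)
    (hnmem : α ∉ (fullPair c).interp N botEnv) :
    ∃ A : PartialPair G, A.carrier.Finite ∧ A.Sub (fullPair c) ∧
      ∀ B : PartialPair G, A.Sub B → B.Sub (fullPair c) →
        α ∈ B.interp M botEnv ∧ α ∉ B.interp N botEnv :=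
  separating_finite_subpair_general c M N α hmem hnmem
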